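/- Let X be a random variable whose distribution P_X has positive information dimension d(X) and is supported on a compact set 𝒳 ⊂ ℝ^N with positive Minkowski dimension d_B(𝒳), let g be measurable, Y = g(X), and let r: 𝒴 → 𝒳 be any reconstructor with error probability P_e = Pr(r(Y) ≠ X). Then the relative information loss satisfies l(X→Y) ≤ P_e · d_B(𝒳)/d(X). -/

import Mathlib

open MeasureTheory ProbabilityTheory Filter Set
open scoped ENNReal NNReal Topology

noncomputable section

/-- Base-2 entropy of the discrete (atomic) part of a measure. -/
def pmfEntropy {β : Type*} [MeasurableSpace β] (ν : Measure β) : ℝ≥0∞ :=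
  ∑' b : β, ENNReal.ofReal (-((ν {b}).toReal * Real.logb 2 (ν {b}).toReal))

/-- Conditional entropy `H(X | Y)` (of a discretely supported `X`) given `Y`,
computed through the regular conditional distribution of `X` given `Y`. -/
def condEnt {α β γ : Type*} [MeasurableSpace α] [MeasurableSpace β] [StandardBorelSpace β]
    [Nonempty β] [MeasurableSpace γ] (μ : Measure α) [IsFiniteMeasure μ]
    (X : α → β) (Y : α → γ) : ℝ≥0∞ :=
  ∫⁻ y, pmfEntropy (condDistrib X Y μ y) ∂(μ.map Y)

/-- Componentwise uniform quantization `X̂ₙ = ⌊2ⁿ X⌋ / 2ⁿ`. -/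
def quant {ι : Type*} (n : ℕ) (x : ι → ℝ) : ι → ℝ :=
  fun i => (⌊(2 : ℝ) ^ n * x i⌋ : ℝ) / (2 : ℝ) ^ n

/-- `H(X̂ₙ)`, entropy of the quantized input. -/
def entQ {α ι : Type*} [MeasurableSpace α] [Fintype ι] (μ : Measure α)
    (X : α → ι → ℝ) (n : ℕ) : ℝ≥0∞ :=
  pmfEntropy (μ.map fun a => quant n (X a))

/-- `H(X̂ₙ | Y)`. -/
def condEntQ {α ι γ : Type*} [MeasurableSpace α] [Fintype ι] [MeasurableSpace γ]
    (μ : Measure α) [IsFiniteMeasure μ] (X : α → ι → ℝ) (Y : α → γ) (n : ℕ) : ℝ≥0∞ :=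
  condEnt μ (fun a => quant n (X a)) Y

/-- Information loss `L(X→Y) = H(X|Y) = limₙ H(X̂ₙ|Y)`; since the sequence
`H(X̂ₙ|Y)` is nondecreasing in `n` the limit equals the supremum. -/
def infoLoss {α ι γ : Type*} [MeasurableSpace α] [Fintype ι] [MeasurableSpace γ]
    (μ : Measure α) [IsFiniteMeasure μ] (X : α → ι → ℝ) (Y : α → γ) : ℝ≥0∞ :=
  ⨆ n : ℕ, condEntQ μ X Y n

/-- The sequence `H(X̂ₙ|Y)/H(X̂ₙ)` whose limit is the relative information loss. -/
def relLossSeq {α ι γ : Type*} [MeasurableSpace α] [Fintype ι] [MeasurableSpace γ]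
    (μ : Measure α) [IsFiniteMeasure μ] (X : α → ι → ℝ) (Y : α → γ) (n : ℕ) : ℝ :=
  (condEntQ μ X Y n).toReal / (entQ μ X n).toReal

/-- The sequence `I(X̂ₙ;Y)/H(X̂ₙ) = (H(X̂ₙ) - H(X̂ₙ|Y))/H(X̂ₙ)` whose limit is the
relative information transfer. -/
def relTransSeq {α ι γ : Type*} [MeasurableSpace α] [Fintype ι] [MeasurableSpace γ]
    (μ : Measure α) [IsFiniteMeasure μ] (X : α → ι → ℝ) (Y : α → γ) (n : ℕ) : ℝ :=
  ((entQ μ X n).toReal - (condEntQ μ X Y n).toReal) / (entQ μ X n).toReal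

/-- `H(ν̂ₙ)` for a measure on `ℝᴺ` (quantized entropy of a distribution). -/
def entQM {ι : Type*} [Fintype ι] (ν : Measure (ι → ℝ)) (n : ℕ) : ℝ≥0∞ :=
  pmfEntropy (ν.map (quant n))

/-!
Fano's inequality, applied to the quantized input `X̂ₙ` with the quantized reconstruction
`quant n (r Y)` as its estimate, gives `H(X̂ₙ | Y) ≤ 1 + P_e log₂ card (quant n '' 𝒳)`: the
quantized estimate can only be wrong where `r Y ≠ X`, and `X̂ₙ` takes values in
`quant n '' 𝒳`. Dividing by `H(X̂ₙ) ~ n d(X)` and using `log₂ card (quant n '' 𝒳) ~ n d_B(𝒳)`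
gives the bound in the limit.
-/
namespace Real

lemma log_natCast_le_log_natCast {m n : ℕ} (h : m ≤ n) : log m ≤ log n := by
  rcases m.eq_zero_or_pos with rfl | hm
  · simpa using log_natCast_nonneg n
  · exact log_le_log (by positivity) (by exact_mod_cast h)

lemma logb_natCast_nonneg {b : ℝ} (hb : 1 ≤ b) (n : ℕ) : 0 ≤ logb b n :=
  div_nonneg (log_natCast_nonneg n) (log_nonneg hb)

lemma sum_negMulLog_le_negMulLog_sum_add_mul_log_card {β : Type*} (E : Finset β) (q : β → ℝ)
    (hq : ∀ b ∈ E, 0 ≤ q b) :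
    ∑ b ∈ E, negMulLog (q b) ≤ negMulLog (∑ b ∈ E, q b) + (∑ b ∈ E, q b) * log E.card := by
  rcases E.eq_empty_or_nonempty with rfl | hE
  · simp
  have hk : (0 : ℝ) < E.card := by exact_mod_cast hE.card_pos
  have hjensen := concaveOn_negMulLog.le_map_sum (t := E) (w := fun _ => (E.card : ℝ)⁻¹)
    (p := q) (fun _ _ => by positivity) (by simp [hk.ne']) (fun b hb => hq b hb)
  simp only [smul_eq_mul, ← Finset.mul_sum] at hjensen
  have hmul : negMulLog ((E.card : ℝ)⁻¹ * ∑ b ∈ E, q b) =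
      (E.card : ℝ)⁻¹ * (negMulLog (∑ b ∈ E, q b) + (∑ b ∈ E, q b) * log E.card) := by
    rw [negMulLog_mul, negMulLog, log_inv]
    ring
  rw [hmul] at hjensen
  exact le_of_mul_le_mul_left hjensen (inv_pos.mpr hk)

/-- Fano's inequality in nats, with the binary entropy of the error bounded by `log 2`. -/
theorem sum_negMulLog_le_log_two_add_mul_log_card {β : Type*} [DecidableEq β] (F : Finset β)
    (p : β → ℝ) (hp : ∀ b, 0 ≤ p b) (hF : ∀ b ∉ F, p b = 0) (hsum : ∑ b ∈ F, p b = 1)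
    (b₀ : β) : ∑ b ∈ F, negMulLog (p b) ≤ log 2 + (1 - p b₀) * log F.card := by
  by_cases hb₀ : b₀ ∈ F
  · have hrest : ∑ b ∈ F.erase b₀, p b = 1 - p b₀ := by
      rw [Finset.sum_erase_eq_sub hb₀, hsum]
    have hjensen := sum_negMulLog_le_negMulLog_sum_add_mul_log_card (F.erase b₀) p
      (fun b _ => hp b)
    have hcard : log (F.erase b₀).card ≤ log F.card :=
      log_natCast_le_log_natCast Finset.card_erase_le
    have hrest_nonneg : 0 ≤ 1 - p b₀ := hrest ▸ Finset.sum_nonneg fun b _ => hp b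
    rw [hrest] at hjensen
    rw [← Finset.add_sum_erase F _ hb₀]
    have := binEntropy_eq_negMulLog_add_negMulLog_one_sub (p b₀) ▸ binEntropy_le_log_two
    linarith [mul_le_mul_of_nonneg_left hcard hrest_nonneg]
  · have hjensen := sum_negMulLog_le_negMulLog_sum_add_mul_log_card F p (fun b _ => hp b)
    rw [hsum, negMulLog_one, zero_add, one_mul] at hjensen
    rw [hF b₀ hb₀, sub_zero, one_mul]
    linarith [log_pos one_lt_two]

end Real

section Entropy

variable {β : Type*} [MeasurableSpace β]

lemma pmfEntropy_eq_ofReal_sum (ν : Measure β) [IsProbabilityMeasure ν] (F : Finset β)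
    (hF : ν (↑F)ᶜ = 0) :
    pmfEntropy ν = ENNReal.ofReal ((∑ b ∈ F, Real.negMulLog (ν {b}).toReal) / Real.log 2) := by
  have hterm : ∀ x : ℝ, -(x * Real.logb 2 x) = Real.negMulLog x / Real.log 2 := fun x => by
    rw [Real.negMulLog, Real.logb]; ring
  have hzero : ∀ b ∉ F, ν {b} = 0 := fun b hb =>
    measure_mono_null (Set.singleton_subset_iff.mpr (Finset.mem_coe.not.mpr hb)) hF
  rw [pmfEntropy, tsum_eq_sum (s := F) fun b hb => by simp [hzero b hb], Finset.sum_div,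
    ENNReal.ofReal_sum_of_nonneg fun b _ => div_nonneg
      (Real.negMulLog_nonneg ENNReal.toReal_nonneg (ENNReal.toReal_le_of_le_ofReal zero_le_one
        (by simpa using prob_le_one))) (Real.log_nonneg one_le_two)]
  simp only [hterm]

variable [MeasurableSingletonClass β]

theorem pmfEntropy_le_one_add_measure_compl_mul_logb_card (ν : Measure β)
    [IsProbabilityMeasure ν] (F : Finset β) (hF : ν (↑F)ᶜ = 0) (b₀ : β) :
    pmfEntropy ν ≤ 1 + ν {b₀}ᶜ * ENNReal.ofReal (Real.logb 2 F.card) := by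
  classical
  set p : β → ℝ := fun b => (ν {b}).toReal
  have hsum : ∑ b ∈ F, p b = 1 := by
    rw [← ENNReal.toReal_sum fun b _ => measure_ne_top ν _, sum_measure_singleton,
      (prob_compl_eq_zero_iff F.measurableSet).mp hF, ENNReal.toReal_one]
  have hzero : ∀ b ∉ F, p b = 0 := fun b hb => by
    simp [p, measure_mono_null (Set.singleton_subset_iff.mpr (Finset.mem_coe.not.mpr hb)) hF]
  have hfano := Real.sum_negMulLog_le_log_two_add_mul_log_card F p
    (fun _ => ENNReal.toReal_nonneg) hzero hsum b₀
  have hcompl : ν {b₀}ᶜ = ENNReal.ofReal (1 - p b₀) := by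
    rw [prob_compl_eq_one_sub (measurableSet_singleton b₀),
      ENNReal.ofReal_sub _ ENNReal.toReal_nonneg, ENNReal.ofReal_one,
      ENNReal.ofReal_toReal (measure_ne_top ν _)]
  have hp₀ : p b₀ ≤ 1 := ENNReal.toReal_le_of_le_ofReal zero_le_one (by simpa using prob_le_one)
  have hlog := Real.logb_natCast_nonneg one_le_two F.card
  rw [pmfEntropy_eq_ofReal_sum ν F hF, hcompl, ← ENNReal.ofReal_mul (by linarith),
    ← ENNReal.ofReal_one, ← ENNReal.ofReal_add zero_le_one (by positivity)]
  gcongr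
  rw [div_le_iff₀ (Real.log_pos one_lt_two), add_mul, one_mul, mul_assoc, Real.logb,
    div_mul_cancel₀ _ (Real.log_pos one_lt_two).ne']
  exact hfano

end Entropy

section Conditional

variable {α β γ : Type*} [MeasurableSpace α] [MeasurableSpace β] [StandardBorelSpace β]
  [Nonempty β] [MeasurableSpace γ]

lemma lintegral_condDistrib_prodMk_preimage (μ : Measure α) [IsFiniteMeasure μ] {X : α → β}
    {Y : α → γ} (hX : Measurable X) (hY : Measurable Y) {S : Set (γ × β)} (hS : MeasurableSet S) :
    ∫⁻ y, condDistrib X Y μ y (Prod.mk y ⁻¹' S) ∂(μ.map Y) = μ ((fun a => (Y a, X a)) ⁻¹' S) := by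
  rw [← Measure.compProd_apply hS, compProd_map_condDistrib hX.aemeasurable,
    Measure.map_apply (hY.prodMk hX) hS]

theorem condEnt_le_one_add_measure_ne_mul_logb_card (μ : Measure α) [IsProbabilityMeasure μ]
    {X : α → β} {Y : α → γ} (hX : Measurable X) (hY : Measurable Y)
    (F : Finset β) (hF : ∀ᵐ a ∂μ, X a ∈ F) {Z : γ → β} (hZ : Measurable Z) :
    condEnt μ X Y ≤ 1 + μ {a | Z (Y a) ≠ X a} * ENNReal.ofReal (Real.logb 2 F.card) := by
  set κ := condDistrib X Y μ
  have : IsProbabilityMeasure (μ.map Y) := Measure.isProbabilityMeasure_map hY.aemeasurable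
  have hsupp : ∀ᵐ y ∂(μ.map Y), κ y (↑F)ᶜ = 0 := by
    have hS : MeasurableSet ((univ : Set γ) ×ˢ (↑F : Set β)ᶜ) :=
      MeasurableSet.univ.prod F.measurableSet.compl
    refine (lintegral_eq_zero_iff (κ.measurable_coe F.measurableSet.compl)).mp ?_
    have h := lintegral_condDistrib_prodMk_preimage μ hX hY hS
    simp only [Set.mk_preimage_prod_right (mem_univ _), Set.mk_preimage_prod, preimage_univ,
      univ_inter] at h
    exact h.trans (ae_iff.mp hF)
  have hS : MeasurableSet {q : γ × β | Z q.1 ≠ q.2} :=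
    (measurableSet_eq_fun (hZ.comp measurable_fst) measurable_snd).compl
  have hpre : ∀ y, Prod.mk y ⁻¹' {q : γ × β | Z q.1 ≠ q.2} = {Z y}ᶜ := fun y => by
    ext; simp [eq_comm]
  calc condEnt μ X Y
      ≤ ∫⁻ y, 1 + κ y (Prod.mk y ⁻¹' {q | Z q.1 ≠ q.2}) * ENNReal.ofReal (Real.logb 2 F.card)
          ∂(μ.map Y) := by
        refine lintegral_mono_ae (hsupp.mono fun y hy => ?_)
        rw [hpre]
        exact pmfEntropy_le_one_add_measure_compl_mul_logb_card (κ y) F hy (Z y)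
    _ = 1 + μ {a | Z (Y a) ≠ X a} * ENNReal.ofReal (Real.logb 2 F.card) := by
        rw [lintegral_add_left measurable_const, lintegral_const, measure_univ, mul_one,
          lintegral_mul_const _ (κ.measurable_kernel_prodMk_left hS),
          lintegral_condDistrib_prodMk_preimage μ hX hY hS]
        rfl

end Conditional

section Quantization

variable {ι : Type*}

lemma measurable_quant (n : ℕ) : Measurable (quant (ι := ι) n) :=
  measurable_pi_lambda _ fun i => ((measurable_of_countable ((↑) : ℤ → ℝ)).comp
    (Int.measurable_floor.comp ((measurable_pi_apply i).const_mul _))).div_const _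

lemma finite_image_quant [Fintype ι] {s : Set (ι → ℝ)} (hs : Bornology.IsBounded s) (n : ℕ) :
    (quant n '' s).Finite := by
  obtain ⟨R, hR⟩ := hs.exists_norm_le
  set N : ℤ := ⌈(2 : ℝ) ^ n * R⌉
  refine ((Set.Finite.pi fun _ : ι => Set.finite_Icc (-N) N).image
    fun k i => (k i : ℝ) / 2 ^ n).subset ?_
  rintro _ ⟨x, hx, rfl⟩
  refine ⟨fun i => ⌊(2 : ℝ) ^ n * x i⌋, fun i _ => ?_, rfl⟩
  obtain ⟨hlo, hhi⟩ := abs_le.mp ((norm_le_pi_norm x i).trans (hR x hx))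
  have h2n : (0 : ℝ) ≤ 2 ^ n := by positivity
  constructor
  · rw [← Int.floor_neg, ← mul_neg]
    exact Int.floor_le_floor (mul_le_mul_of_nonneg_left hlo h2n)
  · exact (Int.floor_le_floor (mul_le_mul_of_nonneg_left hhi h2n)).trans (Int.floor_le_ceil _)

theorem condEntQ_le_one_add_measure_ne_mul_logb_ncard [Fintype ι] {α γ : Type*}
    [MeasurableSpace α] [MeasurableSpace γ] (μ : Measure α) [IsProbabilityMeasure μ]
    {X : α → ι → ℝ} (hX : Measurable X) {Y : α → γ} (hY : Measurable Y) {s : Set (ι → ℝ)}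
    (hs : Bornology.IsBounded s) (hXs : ∀ᵐ a ∂μ, X a ∈ s) {r : γ → ι → ℝ} (hr : Measurable r)
    (n : ℕ) :
    condEntQ μ X Y n ≤
      1 + μ {a | r (Y a) ≠ X a} * ENNReal.ofReal (Real.logb 2 (quant n '' s).ncard) := by
  have hfin := finite_image_quant hs n
  rw [Set.ncard_eq_toFinset_card _ hfin]
  calc condEntQ μ X Y n
      ≤ 1 + μ {a | quant n (r (Y a)) ≠ quant n (X a)} *
          ENNReal.ofReal (Real.logb 2 hfin.toFinset.card) :=
        condEnt_le_one_add_measure_ne_mul_logb_card μ ((measurable_quant n).comp hX) hY _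
          (hXs.mono fun a ha => hfin.mem_toFinset.mpr (mem_image_of_mem _ ha))
          ((measurable_quant n).comp hr)
    _ ≤ _ := by
        gcongr 1 + ?_ * _
        exact measure_mono fun a ha hne => ha (congrArg (quant n) hne)

end Quantization

lemma le_div_of_tendsto_div_of_le {a b h : ℕ → ℝ} {l B d : ℝ}
    (hl : Tendsto (fun n => a n / h n) atTop (𝓝 l))
    (hb : Tendsto (fun n => b n / n) atTop (𝓝 B)) (hh : Tendsto (fun n => h n / n) atTop (𝓝 d))
    (hd : d ≠ 0) (hab : ∀ n, a n ≤ b n) (h0 : ∀ n, 0 ≤ h n) : l ≤ B / d := by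
  refine le_of_tendsto_of_tendsto hl (hb.div hh hd) ?_
  filter_upwards [eventually_ne_atTop 0] with n hn
  rw [Pi.div_apply, div_div_div_cancel_right₀ (Nat.cast_ne_zero.mpr hn)]
  exact div_le_div_of_nonneg_right (hab n) (h0 n)

theorem relLoss_le_error_probability_general
    {α ι γ : Type*} [MeasurableSpace α] [Fintype ι] [MeasurableSpace γ]
    (μ : Measure α) [IsProbabilityMeasure μ]
    (X : α → ι → ℝ) (hX : Measurable X)
    (g : (ι → ℝ) → γ) (hg : Measurable g)
    (s : Set (ι → ℝ)) (hs : IsCompact s) (hXs : ∀ a, X a ∈ s)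
    (dX : ℝ) (hdXpos : 0 < dX)
    (hdX : Tendsto (fun n : ℕ => (entQ μ X n).toReal / n) atTop (𝓝 dX))
    (dB : ℝ)
    (hdB : Tendsto (fun n : ℕ => Real.logb 2 ((quant n '' s).ncard) / n) atTop (𝓝 dB))
    (r : γ → ι → ℝ) (hr : Measurable r)
    (l : ℝ)
    (hl : Tendsto (fun n : ℕ => relLossSeq μ X (fun a => g (X a)) n) atTop (𝓝 l)) :
    l ≤ (μ {a | r (g (X a)) ≠ X a}).toReal * dB / dX := by
  set Pe := μ {a | r (g (X a)) ≠ X a}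
  set L : ℕ → ℝ := fun n => Real.logb 2 (quant n '' s).ncard
  have hL : ∀ n, 0 ≤ L n := fun n => Real.logb_natCast_nonneg one_le_two _
  have hbound : ∀ n, (condEntQ μ X (fun a => g (X a)) n).toReal ≤ 1 + Pe.toReal * L n := by
    intro n
    have h := condEntQ_le_one_add_measure_ne_mul_logb_ncard μ hX (Y := fun a => g (X a))
      (hg.comp hX) hs.isBounded (ae_of_all μ hXs) hr n
    refine (ENNReal.toReal_mono (by finiteness) h).trans_eq ?_
    rw [ENNReal.toReal_add (by finiteness) (by finiteness), ENNReal.toReal_mul,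
      ENNReal.toReal_ofReal (hL n), ENNReal.toReal_one]
  have hdiv : Tendsto (fun n : ℕ => (1 + Pe.toReal * L n) / n) atTop (𝓝 (Pe.toReal * dB)) := by
    simpa [add_div, mul_div_assoc] using
      (tendsto_const_div_atTop_nhds_zero_nat 1).add (hdB.const_mul Pe.toReal)
  exact le_div_of_tendsto_div_of_le hl hdiv hdX hdXpos.ne' hbound fun n => ENNReal.toReal_nonneg

/-- **Relative information loss bounds the reconstruction error.**  Let `X` have
positive information dimension `d(X) = dX` and distribution supported on a compact
set `𝒳 ⊂ ℝᴺ` of positive Minkowski (box-counting) dimension `d_B(𝒳) = dB`, let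
`Y = g(X)` and `r` be any (measurable) reconstructor with error probability
`P_e = Pr(r(Y) ≠ X)`.  Then `l(X→Y) ≤ P_e · d_B(𝒳)/d(X)`. -/
theorem relLoss_le_error_probability
    {α ι γ : Type*} [MeasurableSpace α] [Fintype ι] [MeasurableSpace γ]
    (μ : Measure α) [IsProbabilityMeasure μ]
    (X : α → ι → ℝ) (hX : Measurable X)
    (g : (ι → ℝ) → γ) (hg : Measurable g)
    (s : Set (ι → ℝ)) (hs : IsCompact s) (hXs : ∀ a, X a ∈ s)
    (dX : ℝ) (hdXpos : 0 < dX)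
    (hdX : Tendsto (fun n : ℕ => (entQ μ X n).toReal / n) atTop (𝓝 dX))
    (dB : ℝ) (hdBpos : 0 < dB)
    (hdB : Tendsto (fun n : ℕ => Real.logb 2 ((quant n '' s).ncard) / n) atTop (𝓝 dB))
    (r : γ → ι → ℝ) (hr : Measurable r)
    (l : ℝ)
    (hl : Tendsto (fun n : ℕ => relLossSeq μ X (fun a => g (X a)) n) atTop (𝓝 l)) :
    l ≤ (μ {a | r (g (X a)) ≠ X a}).toReal * dB / dX :=
  relLoss_le_error_probability_general μ X hX g hg s hs hXs dX hdXpos hdX dB hdB r hr l hl
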